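/- Let Ω = {r e^{iθ} : 0 < θ < 1/2, 0 < r < 1 - 2θ} ⊂ 𝔻. Then for all z, w ∈ Ω: (1) 1 - |z| ≤ |1 - z| ≤ (√5/2)(1 - |z|); (2) |Arg((1-z)/(1-w))| ≤ arctan(1/2) < π/4; (3) Re(((1-z)/(1-w))²) ≥ (3/5) |(1-z)/(1-w)|². -/

import Mathlib

/-!
Writing `1 - z = (1 - r cos θ) - i r sin θ`, everything reduces to elementary estimates in `r`
and `θ`. Since `sin θ ≤ θ` and `r < 1 - 2θ`, we get `r (2 sin θ + cos θ) ≤ r (1 + 2θ) < 1`,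
so `1 - z` lies in the sector `-arctan (1/2) ≤ arg ≤ 0`; the quotient of two points of this sector
lies in `|arg| ≤ arctan (1/2)`, which gives (2) and (3). For (1), `|1 - z|² - (1 - r)² =
2r (1 - cos θ) ≤ r θ² < (1 - r)² / 4`.
-/

open Complex Real

/-- The region `Ω = {r e^{iθ} : 0 < θ < 1/2, 0 < r < 1 - 2θ}`. -/
def Omega : Set ℂ :=
  {z : ℂ | ∃ r θ : ℝ, 0 < θ ∧ θ < 1 / 2 ∧ 0 < r ∧ r < 1 - 2 * θ ∧
    z = (r : ℂ) * Complex.exp ((θ : ℂ) * Complex.I)}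

/-- The closed sector `-arctan (1/2) ≤ arg u ≤ 0`, together with `0`. -/
def lowerHalfSlopeSector : Set ℂ := {u | u.im ≤ 0 ∧ -2 * u.im ≤ u.re}

lemma one_sub_mem_lowerHalfSlopeSector {z : ℂ} (hz : z ∈ Omega) :
    1 - z ∈ lowerHalfSlopeSector := by
  obtain ⟨r, θ, hθ, -, hr, hrθ, rfl⟩ := hz
  have hsin_le : Real.sin θ ≤ θ := Real.sin_le hθ.le
  have hsin_nonneg : 0 ≤ Real.sin θ :=
    Real.sin_nonneg_of_nonneg_of_le_pi hθ.le (by linarith [Real.pi_gt_three])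
  have htan : r * (2 * Real.sin θ + Real.cos θ) ≤ 1 :=
    calc r * (2 * Real.sin θ + Real.cos θ) ≤ r * (2 * θ + 1) :=
          mul_le_mul_of_nonneg_left (by linarith [Real.cos_le_one θ]) hr.le
      _ ≤ (1 - 2 * θ) * (1 + 2 * θ) := by nlinarith
      _ ≤ 1 := by nlinarith
  simp only [lowerHalfSlopeSector, Set.mem_ofPred_eq, Complex.sub_re, Complex.sub_im,
    Complex.one_re, Complex.one_im, Complex.re_ofReal_mul, Complex.im_ofReal_mul,
    Complex.exp_ofReal_mul_I_re, Complex.exp_ofReal_mul_I_im]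
  constructor <;> nlinarith

lemma norm_lt_one_of_mem_Omega {z : ℂ} (hz : z ∈ Omega) : ‖z‖ < 1 := by
  obtain ⟨r, θ, hθ, -, hr, hrθ, rfl⟩ := hz
  rw [norm_mul, Complex.norm_exp_ofReal_mul_I, Complex.norm_real, Real.norm_of_nonneg hr.le]
  linarith

lemma sq_norm_one_sub_le_of_mem_Omega {z : ℂ} (hz : z ∈ Omega) :
    ‖1 - z‖ ^ 2 ≤ 5 / 4 * (1 - ‖z‖) ^ 2 := by
  obtain ⟨r, θ, hθ, -, hr, hrθ, rfl⟩ := hz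
  have hnorm : ‖(r : ℂ) * Complex.exp (θ * Complex.I)‖ = r := by
    rw [norm_mul, Complex.norm_exp_ofReal_mul_I, Complex.norm_real, Real.norm_of_nonneg hr.le,
      mul_one]
  have hsq : ‖1 - (r : ℂ) * Complex.exp (θ * Complex.I)‖ ^ 2
      = (1 - r) ^ 2 + 2 * r * (1 - Real.cos θ) := by
    rw [Complex.sq_norm, Complex.normSq_apply]
    simp only [Complex.sub_re, Complex.sub_im, Complex.one_re, Complex.one_im,
      Complex.re_ofReal_mul, Complex.im_ofReal_mul, Complex.exp_ofReal_mul_I_re,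
      Complex.exp_ofReal_mul_I_im]
    linear_combination r ^ 2 * Real.sin_sq_add_cos_sq θ
  have hcos : 2 * (1 - Real.cos θ) ≤ θ ^ 2 := by
    linarith [Real.one_sub_sq_div_two_le_cos (x := θ)]
  have hθsq : θ ^ 2 < (1 - r) ^ 2 / 4 := by nlinarith
  rw [hnorm, hsq]
  nlinarith

lemma norm_one_sub_le_of_mem_Omega {z : ℂ} (hz : z ∈ Omega) :
    ‖1 - z‖ ≤ Real.sqrt 5 / 2 * (1 - ‖z‖) := by
  have hnonneg : 0 ≤ 1 - ‖z‖ := by linarith [norm_lt_one_of_mem_Omega hz]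
  rw [← pow_le_pow_iff_left₀ (norm_nonneg _) (by positivity) two_ne_zero, mul_pow, div_pow,
    Real.sq_sqrt (by norm_num)]
  linarith [sq_norm_one_sub_le_of_mem_Omega hz]

lemma two_mul_abs_im_div_le_re {u v : ℂ} (hu : u ∈ lowerHalfSlopeSector)
    (hv : v ∈ lowerHalfSlopeSector) : 2 * |(u / v).im| ≤ (u / v).re := by
  obtain ⟨hu, hu'⟩ := hu
  obtain ⟨hv, hv'⟩ := hv
  have hnum : 2 * |u.im * v.re - u.re * v.im| ≤ u.re * v.re + u.im * v.im := by
    rcases abs_cases (u.im * v.re - u.re * v.im) with ⟨h, -⟩ | ⟨h, -⟩ <;> rw [h] <;>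
      nlinarith
  rw [Complex.div_re, Complex.div_im, ← add_div, ← sub_div, abs_div,
    abs_of_nonneg (Complex.normSq_nonneg v), ← mul_div_assoc]
  exact div_le_div_of_nonneg_right hnum (Complex.normSq_nonneg v)

lemma abs_arg_le_arctan {q : ℂ} {k : ℝ} (hk : 0 < k) (hq : |q.im| ≤ k * q.re) :
    |Complex.arg q| ≤ Real.arctan k := by
  rcases (show 0 ≤ q.re by nlinarith [abs_nonneg q.im]).eq_or_lt with hre | hre
  · have him : q.im = 0 := abs_nonpos_iff.1 (by simpa [← hre] using hq)
    rw [show q = 0 from Complex.ext hre.symm him, Complex.arg_zero, abs_zero]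
    exact Real.arctan_nonneg.2 hk.le
  · obtain ⟨harg_lb, harg_ub⟩ :=
      abs_lt.1 (Complex.abs_arg_lt_pi_div_two_iff.2 (Or.inl hre))
    have harg : Complex.arg q = Real.arctan (q.im / q.re) := by
      rw [← Complex.tan_arg, Real.arctan_tan harg_lb harg_ub]
    have hslope : |q.im / q.re| ≤ k := by
      rwa [abs_div, abs_of_pos hre, div_le_iff₀ hre]
    obtain ⟨hslope_lb, hslope_ub⟩ := abs_le.1 hslope
    rw [harg, abs_le, ← Real.arctan_neg]
    exact ⟨Real.arctan_mono hslope_lb, Real.arctan_mono hslope_ub⟩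

lemma three_fifths_mul_sq_norm_le_re_sq {q : ℂ} (hq : 2 * |q.im| ≤ q.re) :
    3 / 5 * ‖q‖ ^ 2 ≤ (q ^ 2).re := by
  rw [Complex.sq_norm, Complex.normSq_apply, sq, Complex.mul_re]
  have : q.im ^ 2 ≤ (q.re / 2) ^ 2 := by
    rw [← sq_abs]; exact pow_le_pow_left₀ (abs_nonneg _) (by linarith) 2
  nlinarith

/-- For `z, w ∈ Ω`: (1) `1 - |z| ≤ |1-z| ≤ (√5/2)(1-|z|)`;
(2) `|Arg((1-z)/(1-w))| ≤ arctan(1/2) < π/4`;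
(3) `Re(((1-z)/(1-w))²) ≥ (3/5)|(1-z)/(1-w)|²`. -/
theorem stmt_18 (z w : ℂ) (hz : z ∈ Omega) (hw : w ∈ Omega) :
    (1 - ‖z‖ ≤ ‖1 - z‖ ∧ ‖1 - z‖ ≤ (Real.sqrt 5 / 2) * (1 - ‖z‖)) ∧
    (|Complex.arg ((1 - z) / (1 - w))| ≤ Real.arctan (1 / 2) ∧
      Real.arctan (1 / 2) < Real.pi / 4) ∧
    (3 / 5) * ‖(1 - z) / (1 - w)‖ ^ 2 ≤ ((((1 - z) / (1 - w))) ^ 2).re := by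
  have hq := two_mul_abs_im_div_le_re (one_sub_mem_lowerHalfSlopeSector hz)
    (one_sub_mem_lowerHalfSlopeSector hw)
  refine ⟨⟨?_, norm_one_sub_le_of_mem_Omega hz⟩,
    ⟨abs_arg_le_arctan (by norm_num) (by linarith), ?_⟩, three_fifths_mul_sq_norm_le_re_sq hq⟩
  · simpa using norm_sub_norm_le (1 : ℂ) z
  · rw [← Real.arctan_one]
    exact Real.arctan_strictMono (by norm_num)
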